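/- For any n and d, the number D(n,d) of permutations of {1,...,n} with total displacement 2d equals the sum of the weights ω(mz) over all Motzkin paths mz of width n and area d, i.e., D(n,d) = Σ_{mz ∈ MZ(n,d)} ω(mz). -/

import Mathlib

/-- Moves of a Motzkin path: Up-right, Horizontal-right, Down-right. -/
inductive Move : Type
  | U : Move
  | H : Move
  | D : Move
deriving DecidableEq

open Move

/-- The vertical step of a move. -/
def Move.step : Move → ℤ
  | U => 1
  | H => 0
  | D => -1

/-- The height of a path after its first `i` moves. -/
def heightAt (mz : List Move) (i : ℕ) : ℤ :=
  ((mz.take i).map Move.step).sum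

/-- A word over {U,H,D} is a Motzkin path if it never goes below the x-axis
and ends on the x-axis. -/
def IsMotzkin (mz : List Move) : Prop :=
  (∀ i, 0 ≤ heightAt mz i) ∧ heightAt mz mz.length = 0

/-- The area between the x-axis and the path (sum of heights at integer points). -/
def area (mz : List Move) : ℤ :=
  ∑ i ∈ Finset.range (mz.length + 1), heightAt mz i

/-- `MZ n A` is the set of Motzkin paths of width `n` and area `A`. -/
def MZ (n A : ℕ) : Set (List Move) :=
  {mz | mz.length = n ∧ IsMotzkin mz ∧ area mz = A}

/-- The weight `ω_i` of the `i`-th move (0-indexed): it is `h_i` for U and D moves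
(height after the move for U, before the move for D) and `2h_i + 1` for H moves. -/
def moveWeight (mz : List Move) (i : ℕ) : ℤ :=
  match mz[i]? with
  | some U => heightAt mz (i + 1)
  | some D => heightAt mz i
  | some H => 2 * heightAt mz i + 1
  | none => 1

/-- The weight `ω(mz)` of a Motzkin path. -/
def weight (mz : List Move) : ℤ :=
  ∏ i ∈ Finset.range mz.length, moveWeight mz i

/-- The total displacement `D(π) = Σ_i |i - π(i)|` of a permutation. -/
def totalDisp {n : ℕ} (π : Equiv.Perm (Fin n)) : ℤ :=
  ∑ i : Fin n, |((π i : ℕ) : ℤ) - ((i : ℕ) : ℤ)|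

/-- The word over {U,H,D} associated to a permutation. -/
def toPath {n : ℕ} (π : Equiv.Perm (Fin n)) : List Move :=
  (List.finRange n).map fun i : Fin n =>
    if (i : ℕ) < (π i : ℕ) ∧ (i : ℕ) < (π.symm i : ℕ) then U
    else if (π i : ℕ) < (i : ℕ) ∧ (π.symm i : ℕ) < (i : ℕ) then D
    else H

/-- The last fall length: the length of the maximal suffix consisting of D moves. -/
def lastFall (mz : List Move) : ℕ :=
  (mz.reverse.takeWhile (fun m => decide (m = D))).length

/-- The maximum height of a path. -/
def maxHeight (mz : List Move) : ℕ :=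
  (Finset.range (mz.length + 1)).sup fun i => (heightAt mz i).toNat

/-- `flatsAt mz k` is the number of H moves of `mz` made at height `k`. -/
def flatsAt (mz : List Move) (k : ℕ) : ℕ :=
  ((Finset.range mz.length).filter fun j => mz[j]? = some H ∧ heightAt mz j = (k : ℤ)).card

/-- `peaksAt mz k` is the number of U moves of `mz` ending at height `k`. -/
def peaksAt (mz : List Move) (k : ℕ) : ℕ :=
  ((Finset.range mz.length).filter fun j => mz[j]? = some U ∧ heightAt mz (j + 1) = (k : ℤ)).card

/-- `downsAt mz k` is the number of D moves of `mz` starting at height `k`. -/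
def downsAt (mz : List Move) (k : ℕ) : ℕ :=
  ((Finset.range mz.length).filter fun j => mz[j]? = some D ∧ heightAt mz j = (k : ℤ)).card

/-- A candidate building sequence `(f_0, p_1, f_1, …, p_h, f_h)`, recorded as its
height `h` together with the flat counts `f` and peak counts `p`. -/
structure BSeq where
  h : ℕ
  f : ℕ → ℕ
  p : ℕ → ℕ

/-- `Sset n A` is the set of building sequences for width `n` and area `A`:
all `p`-entries `p_1, …, p_h` are positive, entries beyond the height are zero, and the
width and area conditions hold. -/
def Sset (n A : ℕ) : Set BSeq :=
  {a | (∀ i, 1 ≤ i → i ≤ a.h → 0 < a.p i) ∧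
       a.p 0 = 0 ∧
       (∀ i, a.h < i → a.p i = 0) ∧
       (∀ i, a.h < i → a.f i = 0) ∧
       (∑ i ∈ Finset.range (a.h + 1), a.f i) + 2 * (∑ i ∈ Finset.Icc 1 a.h, a.p i) = n ∧
       (∑ i ∈ Finset.range (a.h + 1), i * a.f i) +
         (∑ i ∈ Finset.Icc 1 a.h, (2 * i - 1) * a.p i) = A}

/-- `mz` has building sequence `a`. -/
def hasBuildSeq (mz : List Move) (a : BSeq) : Prop :=
  maxHeight mz = a.h ∧ (∀ i, flatsAt mz i = a.f i) ∧ (∀ i, peaksAt mz i = a.p i)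

/-- `perm(a) = ∏_{i=0}^h (2i+1)^{f_i} · ∏_{i=1}^h i^{2p_i}`. -/
def permWeight (a : BSeq) : ℕ :=
  (∏ i ∈ Finset.range (a.h + 1), (2 * i + 1) ^ a.f i) *
    ∏ i ∈ Finset.Icc 1 a.h, i ^ (2 * a.p i)

/-- `m(a)`, the number of Motzkin paths with building sequence `a`. -/
def mcount (a : BSeq) : ℕ :=
  Nat.choose (a.f a.h + a.p a.h - 1) (a.p a.h - 1) *
    (∏ i ∈ Finset.Icc 1 (a.h - 1),
      Nat.choose (a.p (i + 1) + a.f i) (a.f i) *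
        Nat.choose (a.p (i + 1) + a.f i + a.p i - 1) (a.p i - 1)) *
    Nat.choose (a.p 1 + a.f 0) (a.f 0)

/-- `M(n,A,l)`: the number of Motzkin paths of width `n`, area `A` and last fall length `l`
(for negative arguments there are no such paths, so the value is `0`; the value at
`(0,0,0)` is `1`, counting the empty path). -/
noncomputable def Mcount (n A l : ℤ) : ℕ :=
  Nat.card {mz : List Move // (mz.length : ℤ) = n ∧ IsMotzkin mz ∧ area mz = A ∧
    (lastFall mz : ℤ) = l}

/-- `D(n,d,l)`: the sum of the weights of all Motzkin paths of width `n`, area `d` and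
last fall length `l`. -/
noncomputable def Dw (n d l : ℤ) : ℤ :=
  ∑ᶠ mz ∈ {mz : List Move | (mz.length : ℤ) = n ∧ IsMotzkin mz ∧ area mz = d ∧
    (lastFall mz : ℤ) = l}, weight mz

/-- `M(n,A,h,p)`: the number of Motzkin paths of width `n`, area `A`, maximum height `h`,
with exactly `p` U-moves ending at height `h` and no H-moves at height `h`. -/
noncomputable def Mtop (n A h p : ℤ) : ℕ :=
  Nat.card {mz : List Move // (mz.length : ℤ) = n ∧ IsMotzkin mz ∧ area mz = A ∧
    (maxHeight mz : ℤ) = h ∧ (peaksAt mz h.toNat : ℤ) = p ∧ flatsAt mz h.toNat = 0}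

/-- `D(n,d,h,p)`: the sum of weights of Motzkin paths of width `n`, area `d`,
maximum height `h`, with exactly `p` U-moves ending at height `h` and no H-moves at height `h`. -/
noncomputable def Dtop (n d h p : ℤ) : ℤ :=
  ∑ᶠ mz ∈ {mz : List Move | (mz.length : ℤ) = n ∧ IsMotzkin mz ∧ area mz = d ∧
    (maxHeight mz : ℤ) = h ∧ (peaksAt mz h.toNat : ℤ) = p ∧ flatsAt mz h.toNat = 0}, weight mz

/-- The area under the first `i` moves of a path (trapezoid rule; may be a half-integer). -/
def prefixArea (mz : List Move) (i : ℕ) : ℚ :=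
  ∑ j ∈ Finset.range i, ((heightAt mz j : ℚ) + (heightAt mz (j + 1) : ℚ)) / 2

/-!
Reading a permutation `π` from left to right, the height of `toPath π` after `i` letters is the
number of arcs `j ↦ π j` with `j < i ≤ π j`. Hence `toPath π` is a Motzkin path, and summing the
heights counts every arc `j ↦ π j` with `j < π j` exactly `π j - j` times, so its area is `D(π)/2`.

Conversely, the graph of a permutation with `toPath π = mz` is built one position and value at a
time: its pairs inside `[0, i)²` form a partial matching reproducing the first `i` letters of `mz`,
with `h_i` positions and `h_i` values still unmatched. Passing from `i` to `i + 1`, a `U` leaves one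
choice, an `H` leaves `2h_i + 1` (fix `i`, or match `i` to one of the open values or positions) and
a `D` leaves `h_i²`. The partial products of these counts and of the weights `ω_j` differ exactly
by the factor `h_i!`, which is `1` at the end of a Motzkin path.
-/

instance : Fintype Move :=
  ⟨{U, H, D}, fun m => by cases m <;> simp⟩

open Finset

lemma injOn_insert_of_notMem_image {α β : Type*} [DecidableEq α] [DecidableEq β] {f : α → β}
    {s : Finset α} {a : α} (hs : Set.InjOn f s) (ha : f a ∉ s.image f) :
    Set.InjOn f ↑(insert a s) := by
  rw [coe_insert, Set.injOn_insert fun h => ha (mem_image_of_mem f h)]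
  exact ⟨hs, by simpa using ha⟩

lemma card_range_sdiff_image {α : Type*} [DecidableEq α] {s : Finset α} {f : α → ℕ} {i : ℕ}
    (hf : Set.InjOn f s) (hs : ∀ a ∈ s, f a < i) : (range i \ s.image f).card = i - s.card := by
  have hsub : s.image f ⊆ range i := fun b hb => by
    obtain ⟨a, ha, rfl⟩ := mem_image.1 hb
    exact mem_range.2 (hs a ha)
  rw [card_sdiff_of_subset hsub, card_image_of_injOn hf, card_range]

lemma sum_abs_sub_eq_two_mul_sum_tsub {α : Type*} [Fintype α] (σ : Equiv.Perm α) (f : α → ℕ) :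
    ∑ x, |(f (σ x) : ℤ) - f x| = 2 * ∑ x, ((f (σ x) - f x : ℕ) : ℤ) := by
  have hzero : ∑ x, ((f (σ x) : ℤ) - f x) = 0 := by
    rw [sum_sub_distrib, Equiv.sum_comp σ fun x => (f x : ℤ), sub_self]
  have hterm : ∀ x, |(f (σ x) : ℤ) - f x| =
      2 * ((f (σ x) - f x : ℕ) : ℤ) - ((f (σ x) : ℤ) - f x) := fun x => by
    rcases abs_cases ((f (σ x) : ℤ) - f x) with ⟨h, _⟩ | ⟨h, _⟩ <;> rw [h] <;> omega
  rw [sum_congr rfl fun x _ => hterm x, sum_sub_distrib, hzero, sub_zero, mul_sum]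

lemma heightAt_succ (mz : List Move) (i : ℕ) :
    heightAt mz (i + 1) = heightAt mz i + ((mz[i]?).map Move.step).getD 0 := by
  rcases h : mz[i]? with _ | m <;> simp [heightAt, List.take_add_one, h]

lemma heightAt_eq_sum (mz : List Move) (i : ℕ) :
    heightAt mz i = ∑ j ∈ range i, ((mz[j]?).map Move.step).getD 0 := by
  induction i with
  | zero => simp [heightAt]
  | succ i ih => rw [heightAt_succ, ih, sum_range_succ]

lemma heightAt_of_length_le {mz : List Move} {i : ℕ} (h : mz.length ≤ i) :
    heightAt mz i = heightAt mz mz.length := by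
  simp [heightAt, List.take_of_length_le h]

-- Sets of pairs `(position, value)` stand for partial permutations; for the graph of `π`,
-- `letterOf` is the letter of `toPath π` (`toPath_getElem?`).
def PosSettled (s : Finset (ℕ × ℕ)) (j : ℕ) : Prop := ∃ p ∈ s, p.1 = j ∧ p.2 ≤ j

def ValSettled (s : Finset (ℕ × ℕ)) (j : ℕ) : Prop := ∃ p ∈ s, p.2 = j ∧ p.1 < j

instance (s : Finset (ℕ × ℕ)) (j : ℕ) : Decidable (PosSettled s j) := by
  unfold PosSettled; infer_instance

instance (s : Finset (ℕ × ℕ)) (j : ℕ) : Decidable (ValSettled s j) := by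
  unfold ValSettled; infer_instance

def letterOf (s : Finset (ℕ × ℕ)) (j : ℕ) : Move :=
  if PosSettled s j then (if ValSettled s j then D else H)
  else if ValSettled s j then H else U

def restrictBelow (i : ℕ) (s : Finset (ℕ × ℕ)) : Finset (ℕ × ℕ) :=
  s.filter fun p => p.1 < i ∧ p.2 < i

def freePos (s : Finset (ℕ × ℕ)) (i : ℕ) : Finset ℕ := range i \ s.image Prod.fst

def freeVal (s : Finset (ℕ × ℕ)) (i : ℕ) : Finset ℕ := range i \ s.image Prod.snd

lemma lt_of_mem_freePos {s : Finset (ℕ × ℕ)} {i a : ℕ} (ha : a ∈ freePos s i) : a < i :=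
  mem_range.1 (mem_sdiff.1 ha).1

lemma lt_of_mem_freeVal {s : Finset (ℕ × ℕ)} {i b : ℕ} (hb : b ∈ freeVal s i) : b < i :=
  mem_range.1 (mem_sdiff.1 hb).1

-- The pairs inside `[0, i)²` of the graph of any `π` with `toPath π = mz` form such a set.
structure IsPrefixMatching (mz : List Move) (i : ℕ) (s : Finset (ℕ × ℕ)) : Prop where
  injOn_fst : Set.InjOn Prod.fst (s : Set (ℕ × ℕ))
  injOn_snd : Set.InjOn Prod.snd (s : Set (ℕ × ℕ))
  lt : ∀ p ∈ s, p.1 < i ∧ p.2 < i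
  getElem?_eq : ∀ j < i, mz[j]? = some (letterOf s j)

open Classical in
noncomputable def prefixMatchings (mz : List Move) (i : ℕ) : Finset (Finset (ℕ × ℕ)) :=
  (range i ×ˢ range i).powerset.filter (IsPrefixMatching mz i)

noncomputable def extensions (mz : List Move) (i : ℕ) (s : Finset (ℕ × ℕ)) :
    Finset (Finset (ℕ × ℕ)) :=
  (prefixMatchings mz (i + 1)).filter (restrictBelow i · = s)

def extensionCount (mz : List Move) (i : ℕ) : ℕ :=
  match mz[i]? with
  | some U => 1
  | some H => 2 * (heightAt mz i).toNat + 1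
  | some D => (heightAt mz i).toNat ^ 2
  | none => 1

section Matching

variable {mz : List Move} {s s' t : Finset (ℕ × ℕ)} {i j : ℕ} {m : Move}

lemma letterOf_congr (h : ∀ p : ℕ × ℕ, max p.1 p.2 = j → (p ∈ s ↔ p ∈ t)) :
    letterOf s j = letterOf t j := by
  have key : ∀ P : ℕ × ℕ → Prop, (∀ p, P p → max p.1 p.2 = j) →
      ((∃ p ∈ s, P p) ↔ ∃ p ∈ t, P p) := fun P hP =>
    ⟨fun ⟨p, hp, hPp⟩ => ⟨p, (h p (hP p hPp)).1 hp, hPp⟩,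
      fun ⟨p, hp, hPp⟩ => ⟨p, (h p (hP p hPp)).2 hp, hPp⟩⟩
  have hP : PosSettled s j ↔ PosSettled t j := key _ fun p hp => by omega
  have hV : ValSettled s j ↔ ValSettled t j := key _ fun p hp => by omega
  simp only [letterOf, hP, hV]

lemma one_sub_step_letterOf (s : Finset (ℕ × ℕ)) (j : ℕ) :
    1 - (letterOf s j).step =
      (if PosSettled s j then 1 else 0) + (if ValSettled s j then 1 else 0) := by
  unfold letterOf
  split_ifs <;> rfl

lemma letterOf_eq_U : letterOf s j = U ↔ ¬PosSettled s j ∧ ¬ValSettled s j := by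
  unfold letterOf; split_ifs <;> simp_all

lemma letterOf_eq_H : letterOf s j = H ↔ (PosSettled s j ↔ ¬ValSettled s j) := by
  unfold letterOf; split_ifs <;> simp_all

lemma letterOf_eq_D : letterOf s j = D ↔ PosSettled s j ∧ ValSettled s j := by
  unfold letterOf; split_ifs <;> simp_all

namespace IsPrefixMatching

-- Each pair `(a, b)` of `s` is counted once, by `PosSettled s a` if `b ≤ a` and by
-- `ValSettled s b` if `a < b`; at each `j` the two counts add up to `1 - step`.
lemma card_eq (hs : IsPrefixMatching mz i s) : (s.card : ℤ) = i - heightAt mz i := by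
  have hfst : (s.filter fun p => p.2 ≤ p.1).image Prod.fst = (range i).filter (PosSettled s) := by
    ext j
    simp only [mem_image, mem_filter, mem_range, PosSettled]
    constructor
    · rintro ⟨p, ⟨hp, hle⟩, rfl⟩
      exact ⟨(hs.lt p hp).1, p, hp, rfl, hle⟩
    · rintro ⟨-, p, hp, rfl, hle⟩
      exact ⟨p, ⟨hp, hle⟩, rfl⟩
  have hsnd : (s.filter fun p => ¬p.2 ≤ p.1).image Prod.snd =
      (range i).filter (ValSettled s) := by
    ext j
    simp only [mem_image, mem_filter, mem_range, ValSettled, not_le]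
    constructor
    · rintro ⟨p, ⟨hp, hlt⟩, rfl⟩
      exact ⟨(hs.lt p hp).2, p, hp, rfl, hlt⟩
    · rintro ⟨-, p, hp, rfl, hlt⟩
      exact ⟨p, ⟨hp, hlt⟩, rfl⟩
  rw [← card_filter_add_card_filter_not (fun p : ℕ × ℕ => p.2 ≤ p.1),
    ← card_image_of_injOn (hs.injOn_fst.mono (coe_subset.2 (filter_subset _ _))),
    ← card_image_of_injOn (hs.injOn_snd.mono (coe_subset.2 (filter_subset _ _))), hfst, hsnd,
    heightAt_eq_sum, card_filter, card_filter]
  push_cast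
  rw [← sum_add_distrib, show (i : ℤ) = ∑ _j ∈ range i, 1 by simp, ← sum_sub_distrib]
  refine sum_congr rfl fun j hj => ?_
  rw [hs.getElem?_eq j (mem_range.1 hj), Option.map_some, Option.getD_some, one_sub_step_letterOf]

lemma restrict (hs : IsPrefixMatching mz i s) {k : ℕ} (hk : k ≤ i) :
    IsPrefixMatching mz k (restrictBelow k s) where
  injOn_fst := hs.injOn_fst.mono (coe_subset.2 (filter_subset _ _))
  injOn_snd := hs.injOn_snd.mono (coe_subset.2 (filter_subset _ _))
  lt p hp := (mem_filter.1 hp).2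
  getElem?_eq j hj := by
    rw [hs.getElem?_eq j (by omega)]
    congr 1
    refine letterOf_congr fun p hp => ?_
    simp only [restrictBelow, mem_filter, iff_self_and]
    omega

lemma notMem_image_fst (hs : IsPrefixMatching mz i s) {a : ℕ} (ha : a = i ∨ a ∈ freePos s i) :
    a ∉ s.image Prod.fst := by
  rcases ha with rfl | ha
  · exact fun h => by obtain ⟨p, hp, he⟩ := mem_image.1 h; exact (hs.lt p hp).1.ne he
  · exact (mem_sdiff.1 ha).2

lemma notMem_image_snd (hs : IsPrefixMatching mz i s) {b : ℕ} (hb : b = i ∨ b ∈ freeVal s i) :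
    b ∉ s.image Prod.snd := by
  rcases hb with rfl | hb
  · exact fun h => by obtain ⟨p, hp, he⟩ := mem_image.1 h; exact (hs.lt p hp).2.ne he
  · exact (mem_sdiff.1 hb).2

lemma card_freePos (hs : IsPrefixMatching mz i s) :
    (freePos s i).card = (heightAt mz i).toNat := by
  have := hs.card_eq
  rw [freePos, card_range_sdiff_image hs.injOn_fst fun p hp => (hs.lt p hp).1]
  omega

lemma card_freeVal (hs : IsPrefixMatching mz i s) :
    (freeVal s i).card = (heightAt mz i).toNat := by
  have := hs.card_eq
  rw [freeVal, card_range_sdiff_image hs.injOn_snd fun p hp => (hs.lt p hp).2]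
  omega

end IsPrefixMatching

lemma mem_prefixMatchings : s ∈ prefixMatchings mz i ↔ IsPrefixMatching mz i s := by
  simp only [prefixMatchings, mem_filter, mem_powerset, and_iff_right_iff_imp]
  intro hs p hp
  simpa using hs.lt p hp

lemma prefixMatchings_zero (mz : List Move) : prefixMatchings mz 0 = {∅} := by
  ext s
  rw [mem_prefixMatchings, mem_singleton]
  refine ⟨fun hs => eq_empty_of_forall_notMem fun p hp => by simpa using (hs.lt p hp).1, ?_⟩
  rintro rfl
  exact ⟨by simp, by simp, by simp, by simp⟩

lemma mem_extensions :
    s' ∈ extensions mz i s ↔ IsPrefixMatching mz (i + 1) s' ∧ restrictBelow i s' = s := by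
  rw [extensions, mem_filter, mem_prefixMatchings]

lemma union_mem_extensions (hs : IsPrefixMatching mz i s) (ht : ∀ p ∈ t, max p.1 p.2 = i)
    (hfst : Set.InjOn Prod.fst (↑(t ∪ s) : Set (ℕ × ℕ)))
    (hsnd : Set.InjOn Prod.snd (↑(t ∪ s) : Set (ℕ × ℕ)))
    (hlet : mz[i]? = some (letterOf t i)) : t ∪ s ∈ extensions mz i s := by
  rw [mem_extensions]
  refine ⟨⟨hfst, hsnd, fun p hp => ?_, fun j hj => ?_⟩, ?_⟩
  · rcases mem_union.1 hp with hp | hp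
    · have := ht p hp; omega
    · have := hs.lt p hp; omega
  · rcases Nat.lt_succ_iff_lt_or_eq.1 hj with hj | rfl
    · rw [hs.getElem?_eq j hj]
      refine congrArg some (letterOf_congr fun p hp => ⟨mem_union_right t, fun h => ?_⟩)
      rcases mem_union.1 h with h | h
      · have := ht p h; omega
      · exact h
    · rw [hlet]
      refine congrArg some (letterOf_congr fun p hp => ⟨mem_union_left s, fun h => ?_⟩)
      rcases mem_union.1 h with h | h
      · exact h
      · have := hs.lt p h; omega
  · ext p
    simp only [restrictBelow, mem_filter, mem_union]
    constructor
    · rintro ⟨hp | hp, h⟩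
      · have := ht p hp; omega
      · exact hp
    · exact fun hp => ⟨Or.inr hp, hs.lt p hp⟩

lemma letterOf_of_mem_extensions (h : s' ∈ extensions mz i s) (hm : mz[i]? = some m) :
    letterOf s' i = m :=
  Option.some_injective _ (((mem_extensions.1 h).1.getElem?_eq i i.lt_succ_self).symm.trans hm)

lemma max_eq_of_mem_extensions (h : s' ∈ extensions mz i s) {p : ℕ × ℕ} (hp : p ∈ s')
    (hps : p ∉ s) : max p.1 p.2 = i := by
  obtain ⟨hs', rfl⟩ := mem_extensions.1 h
  have := hs'.lt p hp
  simp only [restrictBelow, mem_filter, not_and] at hps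
  have := hps hp
  omega

lemma eq_union_of_mem_extensions (h : s' ∈ extensions mz i s) (ht : t ⊆ s')
    (hnew : ∀ q ∈ s', q ∉ s → q ∈ t) : s' = t ∪ s := by
  obtain ⟨-, rfl⟩ := mem_extensions.1 h
  refine Subset.antisymm (fun q hq => ?_) (union_subset ht (filter_subset _ _))
  by_cases hqs : q ∈ restrictBelow i s'
  · exact mem_union_right _ hqs
  · exact mem_union_left _ (hnew q hq hqs)

lemma fst_mem_freePos (h : s' ∈ extensions mz i s) {p : ℕ × ℕ} (hp : p ∈ s') (hp1 : p.1 < i)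
    (hp2 : p.2 = i) : p.1 ∈ freePos s i := by
  obtain ⟨hs', rfl⟩ := mem_extensions.1 h
  refine mem_sdiff.2 ⟨mem_range.2 hp1, fun hmem => ?_⟩
  obtain ⟨q, hq, hqp⟩ := mem_image.1 hmem
  obtain ⟨hqs', -, hq2⟩ := mem_filter.1 hq
  rw [hs'.injOn_fst hqs' hp hqp] at hq2
  omega

lemma snd_mem_freeVal (h : s' ∈ extensions mz i s) {p : ℕ × ℕ} (hp : p ∈ s') (hp1 : p.1 = i)
    (hp2 : p.2 < i) : p.2 ∈ freeVal s i := by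
  obtain ⟨hs', rfl⟩ := mem_extensions.1 h
  refine mem_sdiff.2 ⟨mem_range.2 hp2, fun hmem => ?_⟩
  obtain ⟨q, hq, hqp⟩ := mem_image.1 hmem
  obtain ⟨hqs', hq1, -⟩ := mem_filter.1 hq
  rw [hs'.injOn_snd hqs' hp hqp] at hq1
  omega

lemma singleton_union_mem_extensions (hs : IsPrefixMatching mz i s) {p : ℕ × ℕ}
    (h1 : p.1 = i ∨ p.1 ∈ freePos s i) (h2 : p.2 = i ∨ p.2 ∈ freeVal s i)
    (hmax : max p.1 p.2 = i) (hlet : mz[i]? = some (letterOf {p} i)) :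
    {p} ∪ s ∈ extensions mz i s := by
  refine union_mem_extensions hs (by simpa using hmax) ?_ ?_ hlet <;> rw [← insert_eq]
  · exact injOn_insert_of_notMem_image hs.injOn_fst (hs.notMem_image_fst h1)
  · exact injOn_insert_of_notMem_image hs.injOn_snd (hs.notMem_image_snd h2)

lemma extensions_of_U (hs : IsPrefixMatching mz i s) (hU : mz[i]? = some U) :
    extensions mz i s = {s} := by
  ext s'
  rw [mem_singleton]
  constructor
  · intro h
    obtain ⟨hP, hV⟩ := letterOf_eq_U.1 (letterOf_of_mem_extensions h hU)
    simpa using eq_union_of_mem_extensions h (empty_subset _) fun q hq hqs => by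
      have := max_eq_of_mem_extensions h hq hqs
      by_cases hq1 : q.1 = i
      · exact absurd ⟨q, hq, hq1, by omega⟩ hP
      · exact absurd ⟨q, hq, by omega, by omega⟩ hV
  · rintro rfl
    simpa using union_mem_extensions hs (t := ∅) (by simp) (by simpa using hs.injOn_fst)
      (by simpa using hs.injOn_snd) (by rw [hU]; simp [letterOf, PosSettled, ValSettled])

lemma extensions_of_H (hs : IsPrefixMatching mz i s) (hH : mz[i]? = some H) :
    extensions mz i s = ((insert i (freeVal s i)).image (Prod.mk i) ∪
      (freePos s i).image (·, i)).image ({·} ∪ s) := by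
  ext s'
  constructor
  · intro h
    have hs' := (mem_extensions.1 h).1
    have hlet := letterOf_eq_H.1 (letterOf_of_mem_extensions h hH)
    by_cases hP : PosSettled s' i
    · have hV := hlet.1 hP
      obtain ⟨p, hp, hp1, hp2⟩ := hP
      have hmem : p.2 ∈ insert i (freeVal s i) := by
        rcases hp2.eq_or_lt with hp2 | hp2
        · exact hp2 ▸ mem_insert_self _ _
        · exact mem_insert_of_mem (snd_mem_freeVal h hp hp1 hp2)
      refine mem_image.2 ⟨p, mem_union_left _ (mem_image.2 ⟨p.2, hmem, by rw [← hp1]⟩),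
        (eq_union_of_mem_extensions h (singleton_subset_iff.2 hp) fun q hq hqs => ?_).symm⟩
      have := max_eq_of_mem_extensions h hq hqs
      by_cases hq1 : q.1 = i
      · exact mem_singleton.2 (hs'.injOn_fst hq hp (hq1.trans hp1.symm))
      · exact absurd ⟨q, hq, by omega, by omega⟩ hV
    · obtain ⟨p, hp, hp2, hp1⟩ := not_not.1 (mt hlet.2 hP)
      refine mem_image.2 ⟨p, mem_union_right _ (mem_image.2
        ⟨p.1, fst_mem_freePos h hp hp1 hp2, by rw [← hp2]⟩),
        (eq_union_of_mem_extensions h (singleton_subset_iff.2 hp) fun q hq hqs => ?_).symm⟩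
      have := max_eq_of_mem_extensions h hq hqs
      by_cases hq1 : q.1 = i
      · exact absurd ⟨q, hq, hq1, by omega⟩ hP
      · exact mem_singleton.2 (hs'.injOn_snd hq hp (by omega))
  · intro hmem
    obtain ⟨p, hp, rfl⟩ := mem_image.1 hmem
    rcases mem_union.1 hp with hp | hp
    · obtain ⟨b, hb, rfl⟩ := mem_image.1 hp
      have hb' : b ≤ i := by
        rcases mem_insert.1 hb with rfl | hb
        · rfl
        · exact (lt_of_mem_freeVal hb).le
      exact singleton_union_mem_extensions hs (Or.inl rfl) (mem_insert.1 hb) (max_eq_left hb')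
        (by simp [hH, letterOf, PosSettled, ValSettled, hb'])
    · obtain ⟨a, ha, rfl⟩ := mem_image.1 hp
      have ha' := lt_of_mem_freePos ha
      exact singleton_union_mem_extensions hs (Or.inr ha) (Or.inl rfl) (max_eq_right ha'.le)
        (by simp [hH, letterOf, PosSettled, ValSettled, ha', ha'.ne])

lemma extensions_of_D (hs : IsPrefixMatching mz i s) (hD : mz[i]? = some D) :
    extensions mz i s =
      (freePos s i ×ˢ freeVal s i).image fun ab => {(ab.1, i), (i, ab.2)} ∪ s := by
  ext s'
  constructor
  · intro h
    have hs' := (mem_extensions.1 h).1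
    obtain ⟨⟨p, hp, hp1, hp2⟩, ⟨q, hq, hq2, hq1⟩⟩ :=
      letterOf_eq_D.1 (letterOf_of_mem_extensions h hD)
    have hp2' : p.2 < i := by
      refine lt_of_le_of_ne hp2 fun hpi => ?_
      have := hs'.injOn_snd hp hq (hpi.trans hq2.symm)
      rw [this] at hp1
      omega
    refine mem_image.2 ⟨(q.1, p.2), mem_product.2
      ⟨fst_mem_freePos (p := q) h hq hq1 hq2, snd_mem_freeVal (p := p) h hp hp1 hp2'⟩, ?_⟩
    rw [show ((q.1, i) : ℕ × ℕ) = q from Prod.ext rfl hq2.symm,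
      show ((i, p.2) : ℕ × ℕ) = p from Prod.ext hp1.symm rfl]
    refine (eq_union_of_mem_extensions h (insert_subset hq (singleton_subset_iff.2 hp))
      fun r hr hrs => ?_).symm
    have := max_eq_of_mem_extensions h hr hrs
    by_cases hr1 : r.1 = i
    · exact mem_insert_of_mem (mem_singleton.2 (hs'.injOn_fst hr hp (hr1.trans hp1.symm)))
    · exact mem_insert.2 (Or.inl (hs'.injOn_snd hr hq (by omega)))
  · intro hmem
    obtain ⟨⟨a, b⟩, hab, rfl⟩ := mem_image.1 hmem
    obtain ⟨ha, hb⟩ := mem_product.1 hab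
    have ha' := lt_of_mem_freePos ha
    have hb' := lt_of_mem_freeVal hb
    refine union_mem_extensions hs (by simp [ha'.le, hb'.le]) ?_ ?_
      (by simp [hD, letterOf, PosSettled, ValSettled, ha', hb'.le, ha'.ne])
    · rw [insert_union, ← insert_eq]
      refine injOn_insert_of_notMem_image
        (injOn_insert_of_notMem_image hs.injOn_fst (hs.notMem_image_fst (Or.inl rfl))) ?_
      simpa [image_insert, ha'.ne] using hs.notMem_image_fst (Or.inr ha)
    · rw [insert_union, ← insert_eq]
      refine injOn_insert_of_notMem_image
        (injOn_insert_of_notMem_image hs.injOn_snd (hs.notMem_image_snd (Or.inr hb))) ?_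
      simpa [image_insert, hb'.ne'] using hs.notMem_image_snd (Or.inl rfl)

lemma card_extensions_of_H (hs : IsPrefixMatching mz i s) (hH : mz[i]? = some H) :
    (extensions mz i s).card = 2 * (heightAt mz i).toNat + 1 := by
  rw [extensions_of_H hs hH, card_image_of_injOn, card_union_of_disjoint,
    card_image_of_injective _ (Prod.mk_right_injective i),
    card_image_of_injective _ (Prod.mk_left_injective i),
    card_insert_of_notMem fun h => (lt_of_mem_freeVal h).false, hs.card_freePos,
    hs.card_freeVal]
  · ring
  · refine disjoint_left.2 fun p hp hp' => ?_
    obtain ⟨b, -, rfl⟩ := mem_image.1 hp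
    obtain ⟨a, ha, he⟩ := mem_image.1 hp'
    have := lt_of_mem_freePos ha
    simp only [Prod.mk.injEq] at he
    omega
  · intro x hx y _ (hxy : {x} ∪ s = {y} ∪ s)
    have hxi : x.1 = i ∨ x.2 = i := by
      rcases mem_union.1 hx with hx | hx <;> obtain ⟨_, _, rfl⟩ := mem_image.1 hx <;> simp
    rcases mem_union.1 (hxy ▸ mem_union_left _ (mem_singleton_self x) : x ∈ {y} ∪ s) with h | h
    · exact mem_singleton.1 h
    · have := hs.lt x h
      omega

lemma card_extensions_of_D (hs : IsPrefixMatching mz i s) (hD : mz[i]? = some D) :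
    (extensions mz i s).card = (heightAt mz i).toNat ^ 2 := by
  rw [extensions_of_D hs hD, card_image_of_injOn, card_product, hs.card_freePos,
    hs.card_freeVal, sq]
  intro x hx y hy (hxy : {(x.1, i), (i, x.2)} ∪ s = {(y.1, i), (i, y.2)} ∪ s)
  obtain ⟨hx1, hx2⟩ := mem_product.1 hx
  obtain ⟨hy1, hy2⟩ := mem_product.1 hy
  have := lt_of_mem_freePos hx1
  have := lt_of_mem_freeVal hx2
  have := lt_of_mem_freePos hy1
  have := lt_of_mem_freeVal hy2
  have h1 : (x.1, i) ∈ {(y.1, i), (i, y.2)} ∪ s := hxy ▸ by simp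
  have h2 : (i, x.2) ∈ {(y.1, i), (i, y.2)} ∪ s := hxy ▸ by simp
  simp only [mem_union, mem_insert, mem_singleton, Prod.mk.injEq, and_true, true_and] at h1 h2
  rcases h1 with (h1 | ⟨h1, -⟩) | h1
  · rcases h2 with (⟨h2, -⟩ | h2) | h2
    · omega
    · exact Prod.ext h1 h2
    · have := hs.lt _ h2
      omega
  · omega
  · have := hs.lt _ h1
    omega

lemma card_extensions (hs : IsPrefixMatching mz i s) (hi : i < mz.length) :
    (extensions mz i s).card = extensionCount mz i := by
  obtain ⟨m, hm⟩ : ∃ m, mz[i]? = some m := ⟨mz[i], List.getElem?_eq_getElem hi⟩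
  cases m
  · rw [extensions_of_U hs hm, card_singleton, extensionCount, hm]
  · rw [card_extensions_of_H hs hm, extensionCount, hm]
  · rw [card_extensions_of_D hs hm, extensionCount, hm]

lemma card_prefixMatchings (hi : i ≤ mz.length) :
    (prefixMatchings mz i).card = ∏ j ∈ range i, extensionCount mz j := by
  induction i with
  | zero => simp [prefixMatchings_zero]
  | succ i ih =>
    rw [card_eq_sum_card_fiberwise (f := restrictBelow i) (t := prefixMatchings mz i) fun s' hs' =>
        mem_prefixMatchings.2 ((mem_prefixMatchings.1 hs').restrict (Nat.le_succ i))]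
    refine (sum_congr rfl fun s hs => card_extensions (mem_prefixMatchings.1 hs) hi).trans ?_
    rw [sum_const, smul_eq_mul, ih (by omega), prod_range_succ, mul_comm]

lemma prod_moveWeight_eq (hnn : ∀ k, 0 ≤ heightAt mz k) (i : ℕ) :
    ∏ j ∈ range i, moveWeight mz j =
      (heightAt mz i).toNat.factorial * ∏ j ∈ range i, (extensionCount mz j : ℤ) := by
  induction i with
  | zero => simp [heightAt]
  | succ i ih =>
    obtain ⟨k, hk⟩ : ∃ k : ℕ, heightAt mz i = k := ⟨_, (Int.toNat_of_nonneg (hnn i)).symm⟩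
    have hsucc := heightAt_succ mz i
    rw [prod_range_succ, prod_range_succ, ih, hk, Int.toNat_natCast]
    rcases hm : mz[i]? with _ | m
    · simp [moveWeight, extensionCount, hm, hk, hsucc]
    · cases m
      · simp only [hm, hk, Option.map_some, Option.getD_some, Move.step] at hsucc
        simp only [moveWeight, extensionCount, hm, hsucc]
        rw [show (k : ℤ) + 1 = ((k + 1 : ℕ) : ℤ) by push_cast; ring, Int.toNat_natCast,
          Nat.factorial_succ]
        push_cast
        ring
      · simp only [hm, hk, Option.map_some, Option.getD_some, Move.step, add_zero] at hsucc
        simp only [moveWeight, extensionCount, hm, hsucc, hk, Int.toNat_natCast]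
        push_cast
        ring
      · simp only [hm, hk, Option.map_some, Option.getD_some, Move.step] at hsucc
        obtain ⟨l, rfl⟩ : ∃ l, k = l + 1 := ⟨k - 1, by have := hnn (i + 1); omega⟩
        simp only [moveWeight, extensionCount, hm, hsucc, hk, Int.toNat_natCast]
        rw [show ((l + 1 : ℕ) : ℤ) + -1 = l by push_cast; ring, Int.toNat_natCast,
          Nat.factorial_succ]
        push_cast
        ring

lemma weight_eq_prod_extensionCount (hmz : IsMotzkin mz) :
    weight mz = ∏ j ∈ range mz.length, (extensionCount mz j : ℤ) := by
  rw [weight, prod_moveWeight_eq hmz.1, hmz.2]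
  simp

end Matching

section PermGraph

variable {n : ℕ}

def permGraph (π : Equiv.Perm (Fin n)) : Finset (ℕ × ℕ) :=
  univ.image fun j : Fin n => ((j : ℕ), (π j : ℕ))

lemma length_toPath (π : Equiv.Perm (Fin n)) : (toPath π).length = n := by
  simp [toPath]

lemma mem_permGraph {π : Equiv.Perm (Fin n)} {p : ℕ × ℕ} :
    p ∈ permGraph π ↔ ∃ j : Fin n, ((j : ℕ), (π j : ℕ)) = p := by
  simp [permGraph]

lemma permGraph_injective : Function.Injective (permGraph (n := n)) := by
  intro π σ h
  ext j
  obtain ⟨k, hk⟩ := mem_permGraph.1 (h ▸ mem_permGraph.2 ⟨j, rfl⟩ :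
    ((j : ℕ), (π j : ℕ)) ∈ permGraph σ)
  simp only [Prod.mk.injEq] at hk
  obtain rfl : k = j := Fin.ext hk.1
  exact hk.2.symm

lemma posSettled_permGraph_iff (π : Equiv.Perm (Fin n)) {j : ℕ} (hj : j < n) :
    PosSettled (permGraph π) j ↔ (π ⟨j, hj⟩ : ℕ) ≤ j := by
  constructor
  · rintro ⟨_, hp, rfl, hle⟩
    obtain ⟨a, rfl⟩ := mem_permGraph.1 hp
    exact hle
  · exact fun h => ⟨_, mem_permGraph.2 ⟨⟨j, hj⟩, rfl⟩, rfl, h⟩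

lemma valSettled_permGraph_iff (π : Equiv.Perm (Fin n)) {j : ℕ} (hj : j < n) :
    ValSettled (permGraph π) j ↔ (π.symm ⟨j, hj⟩ : ℕ) < j := by
  constructor
  · rintro ⟨_, hp, rfl, hlt⟩
    obtain ⟨a, rfl⟩ := mem_permGraph.1 hp
    simpa using hlt
  · exact fun h => ⟨((π.symm ⟨j, hj⟩ : ℕ), j), mem_permGraph.2 ⟨π.symm ⟨j, hj⟩, by simp⟩, rfl, h⟩

lemma toPath_getElem? (π : Equiv.Perm (Fin n)) {j : ℕ} (hj : j < n) :
    (toPath π)[j]? = some (letterOf (permGraph π) j) := by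
  have hfix : π ⟨j, hj⟩ = ⟨j, hj⟩ ↔ π.symm ⟨j, hj⟩ = ⟨j, hj⟩ := by
    rw [Equiv.symm_apply_eq, eq_comm]
  simp only [Fin.ext_iff] at hfix
  simp only [toPath, List.length_map, List.length_finRange, hj, getElem?_pos, List.getElem_map,
    List.getElem_finRange, Fin.cast_mk, letterOf, posSettled_permGraph_iff π hj,
    valSettled_permGraph_iff π hj]
  split_ifs <;> first | rfl | omega

lemma isPrefixMatching_permGraph (π : Equiv.Perm (Fin n)) :
    IsPrefixMatching (toPath π) n (permGraph π) where
  injOn_fst p hp q hq h := by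
    obtain ⟨a, rfl⟩ := mem_permGraph.1 hp
    obtain ⟨b, rfl⟩ := mem_permGraph.1 hq
    rw [Fin.ext h]
  injOn_snd p hp q hq h := by
    obtain ⟨a, rfl⟩ := mem_permGraph.1 hp
    obtain ⟨b, rfl⟩ := mem_permGraph.1 hq
    rw [π.injective (Fin.ext h)]
  lt p hp := by
    obtain ⟨a, rfl⟩ := mem_permGraph.1 hp
    exact ⟨a.2, (π a).2⟩
  getElem?_eq j hj := toPath_getElem? π hj

lemma toPath_eq_of_isPrefixMatching {π : Equiv.Perm (Fin n)} {mz : List Move}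
    (hlen : mz.length = n) (h : IsPrefixMatching mz n (permGraph π)) : toPath π = mz := by
  refine List.ext_getElem? fun j => ?_
  by_cases hj : j < n
  · rw [toPath_getElem? π hj, h.getElem?_eq j hj]
  · rw [List.getElem?_eq_none (by rw [length_toPath]; omega), List.getElem?_eq_none (by omega)]

lemma card_filter_fst_lt_permGraph (π : Equiv.Perm (Fin n)) {i : ℕ} (hi : i ≤ n) :
    ((permGraph π).filter fun p => p.1 < i).card = i := by
  rw [permGraph, filter_image, card_image_of_injective _ fun a b h => Fin.ext (congrArg Prod.fst h)]
  simpa [hi] using Fin.card_filter_val_lt (n := n) (m := i)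

lemma heightAt_toPath (π : Equiv.Perm (Fin n)) {i : ℕ} (hi : i ≤ n) :
    heightAt (toPath π) i = ((permGraph π).filter fun p => p.1 < i ∧ i ≤ p.2).card := by
  have hcard := ((isPrefixMatching_permGraph π).restrict hi).card_eq
  have hsplit := card_filter_add_card_filter_not
    (s := (permGraph π).filter fun p => p.1 < i) fun p => p.2 < i
  simp only [filter_filter, not_lt, card_filter_fst_lt_permGraph π hi] at hsplit
  rw [restrictBelow] at hcard
  omega

lemma isMotzkin_toPath (π : Equiv.Perm (Fin n)) : IsMotzkin (toPath π) := by
  have hend : heightAt (toPath π) n = 0 := by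
    rw [heightAt_toPath π le_rfl]
    simpa using fun a b hp _ => ((isPrefixMatching_permGraph π).lt (a, b) hp).2
  refine ⟨fun i => ?_, by rw [length_toPath]; exact hend⟩
  rcases le_total i n with hi | hi
  · rw [heightAt_toPath π hi]
    positivity
  · rw [heightAt_of_length_le (by rw [length_toPath]; exact hi), length_toPath, hend]

lemma two_mul_area_toPath (π : Equiv.Perm (Fin n)) : 2 * area (toPath π) = totalDisp π := by
  have hcross : ∀ p ∈ permGraph π,
      ((range (n + 1)).filter fun i => p.1 < i ∧ i ≤ p.2).card = p.2 - p.1 := by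
    intro p hp
    have := (isPrefixMatching_permGraph π).lt p hp
    rw [← Nat.card_Ioc]
    congr 1
    ext i
    simp only [mem_filter, mem_range, mem_Ioc]
    omega
  calc 2 * area (toPath π)
      = 2 * ∑ i ∈ range (n + 1), ((permGraph π).filter fun p => p.1 < i ∧ i ≤ p.2).card := by
        rw [area, length_toPath, Nat.cast_sum]
        exact congrArg _ (sum_congr rfl fun i hi =>
          heightAt_toPath π (Nat.lt_succ_iff.1 (mem_range.1 hi)))
    _ = 2 * ∑ p ∈ permGraph π, ((p.2 - p.1 : ℕ) : ℤ) := by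
        rw [← Nat.cast_sum, ← sum_congr rfl hcross]
        exact congrArg _ (congrArg _ (sum_card_bipartiteAbove_eq_sum_card_bipartiteBelow _))
    _ = 2 * ∑ j : Fin n, (((π j : ℕ) - j : ℕ) : ℤ) := by
        rw [permGraph, sum_image fun a _ b _ h => Fin.ext (congrArg Prod.fst h)]
    _ = totalDisp π := (sum_abs_sub_eq_two_mul_sum_tsub π fun j => (j : ℕ)).symm

lemma toPath_mem_MZ_iff (π : Equiv.Perm (Fin n)) (d : ℕ) :
    toPath π ∈ MZ n d ↔ totalDisp π = 2 * d := by
  have := two_mul_area_toPath π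
  simp only [MZ, Set.mem_ofPred_eq, length_toPath, isMotzkin_toPath π, true_and]
  constructor <;> intro h <;> omega

end PermGraph

lemma exists_permGraph_eq {mz : List Move} {s : Finset (ℕ × ℕ)}
    (hs : IsPrefixMatching mz mz.length s) (h0 : heightAt mz mz.length = 0) :
    ∃ π : Equiv.Perm (Fin mz.length), permGraph π = s := by
  have hcover : range mz.length ⊆ s.image Prod.fst :=
    sdiff_eq_empty_iff_subset.1 (card_eq_zero.1 (by rw [← freePos, hs.card_freePos, h0]; rfl))
  have hf : ∀ j : Fin mz.length, ∃ b : Fin mz.length, ((j : ℕ), (b : ℕ)) ∈ s := fun j => by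
    obtain ⟨p, hp, hpj⟩ := mem_image.1 (hcover (mem_range.2 j.2))
    exact ⟨⟨p.2, (hs.lt p hp).2⟩, by rw [← hpj]; exact hp⟩
  choose f hf using hf
  have hinj : Function.Injective f := fun j k hjk =>
    Fin.ext (congrArg Prod.fst (hs.injOn_snd (hf j) (hf k) (by simp [hjk])))
  refine ⟨Equiv.ofBijective f (Finite.injective_iff_bijective.1 hinj), ?_⟩
  ext p
  rw [mem_permGraph]
  constructor
  · rintro ⟨j, rfl⟩
    exact hf j
  · intro hp
    exact ⟨⟨p.1, (hs.lt p hp).1⟩, hs.injOn_fst (hf _) hp rfl⟩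

lemma card_filter_toPath_eq {mz : List Move} (hmz : IsMotzkin mz) :
    (univ.filter fun π : Equiv.Perm (Fin mz.length) => toPath π = mz).card =
      (prefixMatchings mz mz.length).card := by
  refine card_bij (fun π _ => permGraph π) (fun π hπ => ?_)
    (fun π _ σ _ h => permGraph_injective h) (fun s hs => ?_)
  · have h := isPrefixMatching_permGraph π
    rw [(mem_filter.1 hπ).2] at h
    exact mem_prefixMatchings.2 h
  · obtain ⟨π, rfl⟩ := exists_permGraph_eq (mem_prefixMatchings.1 hs) hmz.2
    exact ⟨π, mem_filter.2 ⟨mem_univ _, toPath_eq_of_isPrefixMatching rfl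
      (mem_prefixMatchings.1 hs)⟩, rfl⟩

lemma card_filter_toPath_eq_weight {n : ℕ} {mz : List Move} (hmz : IsMotzkin mz)
    (hlen : mz.length = n) :
    ((univ.filter fun π : Equiv.Perm (Fin n) => toPath π = mz).card : ℤ) = weight mz := by
  subst hlen
  rw [card_filter_toPath_eq hmz, card_prefixMatchings le_rfl, weight_eq_prod_extensionCount hmz,
    Nat.cast_prod]

/-- `D(n,d) = Σ_{mz ∈ MZ(n,d)} ω(mz)`. -/
theorem displacement_count_eq_weighted_motzkin_sum (n d : ℕ) :
    (Nat.card {π : Equiv.Perm (Fin n) // totalDisp π = 2 * (d : ℤ)} : ℤ) =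
      ∑ᶠ mz ∈ MZ n d, weight mz := by
  classical
  have hfin : (MZ n d).Finite := (List.finite_length_eq Move n).subset fun _ h => h.1
  rw [← hfin.coe_toFinset, finsum_mem_coe_finset, Nat.card_eq_fintype_card,
    Fintype.card_subtype, card_eq_sum_card_fiberwise (f := toPath) (t := hfin.toFinset)
      fun π hπ => by simpa [toPath_mem_MZ_iff] using hπ]
  push_cast
  refine sum_congr rfl fun mz hmz => ?_
  rw [Set.Finite.mem_toFinset] at hmz
  rw [← card_filter_toPath_eq_weight hmz.2.1 hmz.1, filter_filter]
  exact congrArg _ (congrArg _ (filter_congr fun π _ =>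
    and_iff_right_of_imp fun h => (toPath_mem_MZ_iff π d).1 (h ▸ hmz)))
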